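/- Let n ≥ 1 and let x, y : {1,…,n} → {0,1}. The graph C(x,y) is connected if and only if there is no index i with x_i = y_i = 1. -/

import Mathlib

/-- Vertices of the `Cycles` construction: `a0 = a_{0,4}`, `b0 = b_{0,4}`,
`an = a_{n+1,1}`, `bn = b_{n+1,1}`, and `A i j = a_{i+1,j+1}`, `B i j = b_{i+1,j+1}`
for `i : Fin n`, `j : Fin 4`. -/
inductive CyVert (n : ℕ) : Type
  | a0 : CyVert n
  | b0 : CyVert n
  | an : CyVert n
  | bn : CyVert n
  | A : Fin n → Fin 4 → CyVert n
  | B : Fin n → Fin 4 → CyVert n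

/-- Edges of `C(x, y)`: `a0 ~ b0`; `an ~ bn`; rungs `a_{i,2} ~ b_{i,2}` and
`a_{i,3} ~ b_{i,3}`; chain edges `a_{i-1,4} ~ a_{i,1}` and `b_{i-1,4} ~ b_{i,1}`;
for each `i`: if `x i = 0` the edges `a_{i,1} ~ a_{i,3}` and `a_{i,2} ~ a_{i,4}`,
if `x i = 1` the edges `a_{i,1} ~ a_{i,2}` and `a_{i,3} ~ a_{i,4}`;
if `y i = 0` the edges `b_{i,1} ~ b_{i,4}` and `b_{i,2} ~ b_{i,3}`,
if `y i = 1` the edges `b_{i,1} ~ b_{i,2}` and `b_{i,3} ~ b_{i,4}`; no other edges. -/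
def cyRel {n : ℕ} (x y : Fin n → Fin 2) : CyVert n → CyVert n → Prop
  | .a0, .b0 => True
  | .an, .bn => True
  | .a0, .A i j => (i : ℕ) = 0 ∧ j = 0
  | .b0, .B i j => (i : ℕ) = 0 ∧ j = 0
  | .A i j, .an => (i : ℕ) = n - 1 ∧ j = 3
  | .B i j, .bn => (i : ℕ) = n - 1 ∧ j = 3
  | .A i j, .B k l => i = k ∧ j = l ∧ (j = 1 ∨ j = 2)
  | .A i j, .A k l =>
      ((k : ℕ) = (i : ℕ) + 1 ∧ j = 3 ∧ l = 0) ∨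
      (i = k ∧ ((x i = 0 ∧ ((j = 0 ∧ l = 2) ∨ (j = 1 ∧ l = 3))) ∨
                (x i = 1 ∧ ((j = 0 ∧ l = 1) ∨ (j = 2 ∧ l = 3)))))
  | .B i j, .B k l =>
      ((k : ℕ) = (i : ℕ) + 1 ∧ j = 3 ∧ l = 0) ∨
      (i = k ∧ ((y i = 0 ∧ ((j = 0 ∧ l = 3) ∨ (j = 1 ∧ l = 2))) ∨
                (y i = 1 ∧ ((j = 0 ∧ l = 1) ∨ (j = 2 ∧ l = 3)))))
  | _, _ => False

/-- The `Cycles` graph. -/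
def CyGraph {n : ℕ} (x y : Fin n → Fin 2) : SimpleGraph (CyVert n) :=
  SimpleGraph.fromRel (cyRel x y)

/-!
Think of `C(x, y)` as a ladder whose vertices are ordered by `CyVert.level`: the ends `a₀, b₀`
at level `0`, gadget `i` at levels `4i+1, …, 4i+4`, the ends `aₙ₊₁, bₙ₊₁` on top.

If `x i = y i = 1`, every edge of gadget `i` joins two of its first two levels or two of its last
two, so no edge crosses from level `≤ 4i+2` to level `≥ 4i+3` and `a₀` is cut off from `aₙ₊₁`.
Otherwise the edges of gadget `i` connect each of its vertices to one of its two entries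
`a_{i,1}, b_{i,1}`, so once both entries are reachable from `a₀` so is the whole gadget, exits
included, and induction along the ladder reaches every vertex.
-/
theorem SimpleGraph.Reachable.mem_of_forall_adj_mem {V : Type*} {G : SimpleGraph V} {S : Set V}
    (hS : ∀ u v, G.Adj u v → u ∈ S → v ∈ S) {a b : V} (hab : G.Reachable a b) (ha : a ∈ S) :
    b ∈ S := by
  by_contra hb
  obtain ⟨p⟩ := hab
  obtain ⟨d, -, hd, hd'⟩ := p.exists_boundary_dart S ha hb
  exact hd' (hS _ _ d.adj hd)

namespace CyVert

variable {n : ℕ}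

def level : CyVert n → ℕ
  | a0 | b0 => 0
  | A k j | B k j => 4 * k + j + 1
  | an | bn => 4 * n + 1

end CyVert

open CyVert

variable {n : ℕ} {x y : Fin n → Fin 2}

theorem level_le_iff_of_cyRel {i : Fin n} (hx : x i = 1) (hy : y i = 1) {u v : CyVert n}
    (h : cyRel x y u v) : u.level ≤ 4 * i + 2 ↔ v.level ≤ 4 * i + 2 := by
  have hxi : ∀ k, x k = 0 → (k : ℕ) ≠ i := by rintro k h hk; simp_all [Fin.ext hk]
  have hyi : ∀ k, y k = 0 → (k : ℕ) ≠ i := by rintro k h hk; simp_all [Fin.ext hk]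
  rcases u with _ | _ | _ | _ | ⟨k, j⟩ | ⟨k, j⟩ <;>
    rcases v with _ | _ | _ | _ | ⟨l, m⟩ | ⟨l, m⟩ <;>
    simp only [cyRel] at h <;> simp only [level] <;> try fin_omega
  all_goals
    rcases h with h | ⟨rfl, ⟨hk, h⟩ | ⟨-, h⟩⟩
    · fin_omega
    · first | have := hxi k hk | have := hyi k hk
      fin_omega
    · fin_omega

theorem cyGraph_not_connected {i : Fin n} (hx : x i = 1) (hy : y i = 1) :
    ¬ (CyGraph x y).Connected := by
  intro h
  have hcut : ∀ u v, (CyGraph x y).Adj u v → u.level ≤ 4 * i + 2 → v.level ≤ 4 * i + 2 := by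
    rintro u v ⟨-, huv | hvu⟩
    exacts [(level_le_iff_of_cyRel hx hy huv).1, (level_le_iff_of_cyRel hx hy hvu).2]
  have := (h.preconnected a0 an).mem_of_forall_adj_mem (S := {v | v.level ≤ 4 * (i : ℕ) + 2}) hcut
    (Nat.zero_le _)
  simp only [Set.mem_ofPred_eq, level] at this
  omega

theorem reachable_of_cyRel (u v : CyVert n) (h : cyRel x y u v) : (CyGraph x y).Reachable u v := by
  by_cases huv : u = v
  · exact huv ▸ .rfl
  · exact SimpleGraph.Adj.reachable ⟨huv, .inl h⟩

theorem reachable_gadget {i : Fin n} (hxy : ¬ (x i = 1 ∧ y i = 1))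
    (hAB : (CyGraph x y).Reachable (A i 0) (B i 0)) (j : Fin 4) :
    (CyGraph x y).Reachable (A i 0) (A i j) ∧ (CyGraph x y).Reachable (A i 0) (B i j) := by
  set G := CyGraph x y
  have rung₁ : G.Reachable (A i 1) (B i 1) := reachable_of_cyRel _ _ (by simp [cyRel])
  have rung₂ : G.Reachable (A i 2) (B i 2) := reachable_of_cyRel _ _ (by simp [cyRel])
  suffices h : G.Reachable (A i 0) (A i 1) ∧ G.Reachable (A i 0) (A i 2) ∧
      G.Reachable (A i 0) (A i 3) ∧ G.Reachable (A i 0) (B i 3) by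
    obtain ⟨a₁, a₂, a₃, b₃⟩ := h
    fin_cases j
    exacts [⟨.rfl, hAB⟩, ⟨a₁, a₁.trans rung₁⟩, ⟨a₂, a₂.trans rung₂⟩, ⟨a₃, b₃⟩]
  obtain hx | hx : x i = 0 ∨ x i = 1 := by omega
  all_goals obtain hy | hy : y i = 0 ∨ y i = 1 := by omega
  · have a₂ : G.Reachable (A i 0) (A i 2) := reachable_of_cyRel _ _ (by simp [cyRel, hx])
    have b₂₁ : G.Reachable (B i 2) (B i 1) := (reachable_of_cyRel _ _ (by simp [cyRel, hy])).symm
    have a₁ := ((a₂.trans rung₂).trans b₂₁).trans rung₁.symm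
    exact ⟨a₁, a₂, a₁.trans (reachable_of_cyRel _ _ (by simp [cyRel, hx])),
      hAB.trans (reachable_of_cyRel _ _ (by simp [cyRel, hy]))⟩
  · have a₂ : G.Reachable (A i 0) (A i 2) := reachable_of_cyRel _ _ (by simp [cyRel, hx])
    have b₁ := hAB.trans (reachable_of_cyRel (B i 0) (B i 1) (by simp [cyRel, hy]))
    have a₁ := b₁.trans rung₁.symm
    exact ⟨a₁, a₂, a₁.trans (reachable_of_cyRel _ _ (by simp [cyRel, hx])),
      (a₂.trans rung₂).trans (reachable_of_cyRel _ _ (by simp [cyRel, hy]))⟩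
  · have a₁ : G.Reachable (A i 0) (A i 1) := reachable_of_cyRel _ _ (by simp [cyRel, hx])
    have b₂ := (a₁.trans rung₁).trans (reachable_of_cyRel (B i 1) (B i 2) (by simp [cyRel, hy]))
    have a₂ := b₂.trans rung₂.symm
    exact ⟨a₁, a₂, a₂.trans (reachable_of_cyRel _ _ (by simp [cyRel, hx])),
      hAB.trans (reachable_of_cyRel _ _ (by simp [cyRel, hy]))⟩
  · exact absurd ⟨hx, hy⟩ hxy

theorem reachable_gadget_entries {m : ℕ} {x y : Fin (m + 1) → Fin 2}
    (hxy : ¬ ∃ i, x i = 1 ∧ y i = 1) (i : Fin (m + 1)) :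
    (CyGraph x y).Reachable a0 (A i 0) ∧ (CyGraph x y).Reachable a0 (B i 0) := by
  induction i using Fin.induction with
  | zero =>
    exact ⟨reachable_of_cyRel _ _ (by simp [cyRel]),
      (reachable_of_cyRel a0 b0 trivial).trans (reachable_of_cyRel _ _ (by simp [cyRel]))⟩
  | succ i ih =>
    obtain ⟨hA, hB⟩ := ih
    obtain ⟨a₃, b₃⟩ := reachable_gadget (fun h => hxy ⟨_, h⟩) (hA.symm.trans hB) 3
    exact ⟨(hA.trans a₃).trans (reachable_of_cyRel _ _ (by simp [cyRel])),
      (hA.trans b₃).trans (reachable_of_cyRel _ _ (by simp [cyRel]))⟩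

theorem cyGraph_connected {m : ℕ} {x y : Fin (m + 1) → Fin 2} (hxy : ¬ ∃ i, x i = 1 ∧ y i = 1) :
    (CyGraph x y).Connected := by
  have hAB (i j) : (CyGraph x y).Reachable a0 (A i j) ∧ (CyGraph x y).Reachable a0 (B i j) := by
    obtain ⟨hA, hB⟩ := reachable_gadget_entries hxy i
    exact (reachable_gadget (fun h => hxy ⟨_, h⟩) (hA.symm.trans hB) j).imp hA.trans hA.trans
  have han : (CyGraph x y).Reachable a0 an :=
    (hAB (Fin.last m) 3).1.trans (reachable_of_cyRel _ _ (by simp [cyRel]))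
  refine (SimpleGraph.connected_iff_exists_forall_reachable _).2 ⟨a0, ?_⟩
  rintro (_ | _ | _ | _ | ⟨i, j⟩ | ⟨i, j⟩)
  exacts [.rfl, reachable_of_cyRel a0 b0 trivial, han, han.trans (reachable_of_cyRel an bn trivial),
    (hAB i j).1, (hAB i j).2]

theorem stmt_13 {n : ℕ} (hn : 1 ≤ n) (x y : Fin n → Fin 2) :
    (CyGraph x y).Connected ↔ ¬ ∃ i, x i = 1 ∧ y i = 1 := by
  refine ⟨fun h ⟨i, hx, hy⟩ => cyGraph_not_connected hx hy h, fun h => ?_⟩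
  obtain ⟨m, rfl⟩ : ∃ m, n = m + 1 := ⟨n - 1, by omega⟩
  exact cyGraph_connected h
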